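/- Let G = ⟨a, b | b a b⁻¹ a = a² b a b⁻¹⟩ be the Baumslag group, set t = b a b⁻¹ ∈ G, and define group elements w_0 = t and w_{n+1} = b · w_n · a · w_n⁻¹ · b⁻¹ for n ≥ 0. Then w_n = t^{τ(n)} in G for all n. Moreover, defining the words over the alphabet {a, a⁻¹, t, t⁻¹, b, b⁻¹} by the list recursion W_0 = [t] and W_{n+1} = [b] ++ W_n ++ [a] ++ (W_n)⁻¹ ++ [b⁻¹] (where (W)⁻¹ reverses the list and inverts each letter), the word length satisfies |W_n| = 2^{n+2} − 3. -/
import Mathlib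


/-- The two generators `a` and `b` of the Baumslag group. -/
inductive BGGen : Type
  | a | b
  deriving DecidableEq

/-- The single relator `b a b⁻¹ a (a² b a b⁻¹)⁻¹` of the Baumslag group
`BG = ⟨a,b ∣ b a b⁻¹ a = a² b a b⁻¹⟩`. -/
def bgRels : Set (FreeGroup BGGen) :=
  {FreeGroup.of BGGen.b * FreeGroup.of BGGen.a * (FreeGroup.of BGGen.b)⁻¹ *
      FreeGroup.of BGGen.a *
      (FreeGroup.of BGGen.a * FreeGroup.of BGGen.a * FreeGroup.of BGGen.b *
        FreeGroup.of BGGen.a * (FreeGroup.of BGGen.b)⁻¹)⁻¹}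

/-- The Baumslag group `BG = ⟨a,b ∣ b a b⁻¹ a = a² b a b⁻¹⟩`. -/
abbrev BaumslagGroup : Type := PresentedGroup bgRels

/-- The element `t = b a b⁻¹` of the Baumslag group. -/
def tElt : BaumslagGroup :=
  PresentedGroup.of BGGen.b * PresentedGroup.of BGGen.a * (PresentedGroup.of BGGen.b)⁻¹

/-- The group elements `w 0 = t`, `w (n+1) = b · w n · a · (w n)⁻¹ · b⁻¹`. -/
def wElt : ℕ → BaumslagGroup
  | 0 => tElt
  | n + 1 =>
      PresentedGroup.of BGGen.b * wElt n * PresentedGroup.of BGGen.a * (wElt n)⁻¹ *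
        (PresentedGroup.of BGGen.b)⁻¹

/-- The tower function `τ(0) = 1`, `τ(i+1) = 2^{τ(i)}`. -/
def tow : ℕ → ℕ
  | 0 => 1
  | i + 1 => 2 ^ tow i

/-- The alphabet `{a, a⁻¹, t, t⁻¹, b, b⁻¹}`. -/
inductive Letter : Type
  | a | ainv | t | tinv | b | binv
  deriving DecidableEq

/-- Formal inversion of a letter. -/
def Letter.inv : Letter → Letter
  | .a => .ainv
  | .ainv => .a
  | .t => .tinv
  | .tinv => .t
  | .b => .binv
  | .binv => .b

/-- The formal inverse of a word: reverse the list and invert each letter. -/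
def wordInv (w : List Letter) : List Letter :=
  (w.map Letter.inv).reverse

/-- The words `W 0 = [t]`, `W (n+1) = [b] ++ W n ++ [a] ++ (W n)⁻¹ ++ [b⁻¹]`. -/
def wWord : ℕ → List Letter
  | 0 => [Letter.t]
  | n + 1 => [Letter.b] ++ wWord n ++ [Letter.a] ++ wordInv (wWord n) ++ [Letter.binv]

private abbrev aG : BaumslagGroup := PresentedGroup.of BGGen.a
private abbrev bG : BaumslagGroup := PresentedGroup.of BGGen.b

private lemma bg_rel : tElt * aG = aG * aG * tElt := by
  have h : (QuotientGroup.mk (FreeGroup.of BGGen.b * FreeGroup.of BGGen.a *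
      (FreeGroup.of BGGen.b)⁻¹ * FreeGroup.of BGGen.a *
      (FreeGroup.of BGGen.a * FreeGroup.of BGGen.a * FreeGroup.of BGGen.b *
        FreeGroup.of BGGen.a * (FreeGroup.of BGGen.b)⁻¹)⁻¹) : BaumslagGroup) = 1 := by
    apply (QuotientGroup.eq_one_iff _).mpr
    exact Subgroup.subset_normalClosure rfl
  rw [QuotientGroup.mk_mul, QuotientGroup.mk_inv, QuotientGroup.mk_mul,
    QuotientGroup.mk_mul, QuotientGroup.mk_mul, QuotientGroup.mk_mul,
    QuotientGroup.mk_mul, QuotientGroup.mk_inv, mul_inv_eq_one] at h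
  have h' : bG * aG * bG⁻¹ * aG = aG * aG * bG * aG * bG⁻¹ := h
  simp only [tElt, mul_assoc] at h' ⊢
  exact h'

private lemma t_pow_a : ∀ m : ℕ, tElt * aG ^ m = aG ^ (2 * m) * tElt := by
  intro m
  induction m with
  | zero => simp
  | succ m ih =>
    have : tElt * aG ^ (m + 1) = (tElt * aG ^ m) * aG := by rw [pow_succ, mul_assoc]
    rw [this, ih, mul_assoc, bg_rel]
    rw [Nat.mul_add, pow_add]
    group

private lemma tk_a : ∀ k : ℕ, tElt ^ k * aG = aG ^ (2 ^ k) * tElt ^ k := by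
  intro k
  induction k with
  | zero => simp
  | succ k ih =>
    have : tElt ^ (k + 1) * aG = tElt * (tElt ^ k * aG) := by rw [pow_succ']; group
    rw [this, ih, ← mul_assoc, t_pow_a, pow_succ]
    group

private lemma b_apow (m : ℕ) : bG * aG ^ m * bG⁻¹ = tElt ^ m := by
  have : tElt ^ m = (bG * aG * bG⁻¹) ^ m := rfl
  rw [this, conj_pow]

/-- In the Baumslag group, `w n = t^{τ(n)}` for all `n`, and the
corresponding words satisfy `|W n| = 2^{n+2} − 3`. -/
theorem baumslag_tower_and_length :
    (∀ n : ℕ, wElt n = tElt ^ tow n) ∧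
    (∀ n : ℕ, (wWord n).length = 2 ^ (n + 2) - 3) := by
  constructor
  · intro n
    induction n with
    | zero => simp [wElt, tow]
    | succ n ih =>
      have hk : wElt n * aG * (wElt n)⁻¹ = aG ^ (2 ^ tow n) := by
        rw [ih, tk_a, mul_assoc, mul_inv_cancel, mul_one]
      show bG * wElt n * aG * (wElt n)⁻¹ * bG⁻¹ = tElt ^ tow (n + 1)
      have : bG * wElt n * aG * (wElt n)⁻¹ * bG⁻¹
          = bG * (wElt n * aG * (wElt n)⁻¹) * bG⁻¹ := by group
      rw [this, hk, b_apow]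
      rfl
  · intro n
    induction n with
    | zero => rfl
    | succ n ih =>
      have hinv : (wordInv (wWord n)).length = (wWord n).length := by
        simp [wordInv]
      show ([Letter.b] ++ wWord n ++ [Letter.a] ++ wordInv (wWord n)
          ++ [Letter.binv]).length = 2 ^ (n + 1 + 2) - 3
      simp only [List.length_append, List.length_cons, List.length_nil, hinv, ih]
      have h3 : 3 ≤ 2 ^ (n + 2) := by
        calc 3 ≤ 2 ^ 2 := by norm_num
        _ ≤ 2 ^ (n + 2) := Nat.pow_le_pow_right (by norm_num) (by omega)
      have h4 : 2 ^ (n + 1 + 2) = 2 * 2 ^ (n + 2) := by ring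
      omega
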